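/- (Average relay power formula, eq. (16).) Let P_{S1}, P_{S2}, δ₁, δ₂, ρ > 0 satisfy the balanced-rate condition P_{S1}/δ₁ = P_{S2}/δ₂, and write λ = λ(ρ). Then the average power of the truncated optimal policy satisfies E[ max{A(X,Y),B(X,Y)} · 1{(X,Y) ∈ M(ρ)} ] = ∫_λ^∞ ∫_{δ₁(1+(P_{S2}+ρ)y)/(P_{S1}(ρy−δ₁))}^{y} (δ₁(1+P_{S1}x+P_{S2}y)/(y(P_{S1}x−δ₁))) f_X(x) f_Y(y) dx dy + ∫_λ^∞ ∫_{δ₂(1+(P_{S1}+ρ)x)/(P_{S2}(ρx−δ₂))}^{x} (δ₂(1+P_{S1}x+P_{S2}y)/(x(P_{S2}y−δ₂))) f_X(x) f_Y(y) dy dx. -/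

import Mathlib

/-!
Write the balanced-rate condition as `δ₁ = P_{S1} c`, `δ₂ = P_{S2} c`. Then `A(x, y) ≥ B(x, y)`
exactly when `x ≤ y`, so the policy spends `A` above the diagonal and `B` below it (the diagonal
is null). Above the diagonal, `A(x, y) ≤ ρ` means `x ≥ g(y) = δ₁(1 + (P_{S2} + ρ)y) /
(P_{S1}(ρy − δ₁))`, and `g(y) ≤ y` is `ρy² − c(P_{S1} + P_{S2} + ρ)y − c ≥ 0`, i.e. `y ≥ λ`, the
positive root of this quadratic. So `M(ρ) ∩ {x ≤ y}` is the wedge `{y ≥ λ, g(y) ≤ x ≤ y}`, and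
Fubini against the exponential densities gives the first integral; the second is its mirror
image under `x ↔ y`, `1 ↔ 2`.
-/

open MeasureTheory ProbabilityTheory Set

noncomputable section

namespace RelayPower

instance (r : ℝ) : NullSingletonClass (expMeasure r) :=
  inferInstanceAs (NullSingletonClass (volume.withDensity _))

instance (r : ℝ) : SFinite (expMeasure r) := inferInstanceAs (SFinite (volume.withDensity _))

lemma ae_fst_ne_snd {α : Type*} [MeasurableSpace α] [MeasurableEq α] (μ ν : Measure α)
    [SFinite ν] [NullSingletonClass ν] : ∀ᵐ p ∂μ.prod ν, p.1 ≠ p.2 := by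
  rw [ae_iff]
  simp only [ne_eq, not_not]
  change μ.prod ν (diagonal α) = 0
  have hslice (x : α) : Prod.mk x ⁻¹' diagonal α = {x} := by ext; simp [eq_comm]
  simp [Measure.prod_apply measurableSet_diagonal, hslice]

lemma integrable_indicator_of_norm_le {α : Type*} [MeasurableSpace α] {μ : Measure α}
    [IsFiniteMeasure μ] {s : Set α} {f : α → ℝ} (hs : MeasurableSet s) (hf : Measurable f)
    {C : ℝ} (hC : ∀ p ∈ s, ‖f p‖ ≤ C) : Integrable (s.indicator f) μ :=
  (Measure.integrableOn_of_bounded (measure_ne_top μ s) hf.aestronglyMeasurable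
    (ae_restrict_of_forall_mem hs hC)).integrable_indicator hs

lemma setIntegral_expMeasure {Ω : ℝ} (hΩ : 0 < Ω) {s : Set ℝ} (hs : MeasurableSet s)
    (hs0 : s ⊆ Ici 0) (F : ℝ → ℝ) :
    ∫ x in s, F x ∂expMeasure (1 / Ω) = ∫ x in s, F x * (1 / Ω * Real.exp (-x / Ω)) := by
  rw [expMeasure, gammaMeasure, setIntegral_withDensity_eq_setIntegral_toReal_smul'
    (f := gammaPDF 1 (1 / Ω)) s (measurable_gammaPDFReal 1 _).ennreal_ofReal
    (ae_of_all _ fun _ => ENNReal.ofReal_lt_top) F]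
  refine setIntegral_congr_fun hs fun x hx => ?_
  change (exponentialPDF (1 / Ω) x).toReal • F x = _
  rw [exponentialPDF_of_nonneg (hs0 hx), ENNReal.toReal_ofReal (by positivity), smul_eq_mul,
    mul_comm, neg_div, div_eq_inv_mul x, one_div]

def wedge (lam : ℝ) (g : ℝ → ℝ) : Set (ℝ × ℝ) := {p | lam ≤ p.2 ∧ g p.2 ≤ p.1 ∧ p.1 ≤ p.2}

lemma measurableSet_wedge (lam : ℝ) {g : ℝ → ℝ} (hg : Measurable g) :
    MeasurableSet (wedge lam g) :=
  (measurableSet_le measurable_const measurable_snd).inter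
    ((measurableSet_le (hg.comp measurable_snd) measurable_fst).inter
      (measurableSet_le measurable_fst measurable_snd))

lemma integral_indicator_wedge {ν₁ ν₂ : Measure ℝ} [SFinite ν₁] [SFinite ν₂] {lam : ℝ}
    {g : ℝ → ℝ} {F : ℝ × ℝ → ℝ} (hF : Integrable ((wedge lam g).indicator F) (ν₁.prod ν₂)) :
    ∫ p, (wedge lam g).indicator F p ∂ν₁.prod ν₂
      = ∫ v in Ici lam, ∫ u in Icc (g v) v, F (u, v) ∂ν₁ ∂ν₂ := by
  rw [integral_prod_symm _ hF, ← integral_indicator measurableSet_Ici]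
  congr 1 with v
  by_cases hv : lam ≤ v
  · rw [indicator_of_mem (mem_Ici.mpr hv), ← integral_indicator measurableSet_Icc]
    congr 1 with u
    simp only [indicator, wedge, mem_ofPred_eq, mem_Icc, hv, true_and]
  · rw [indicator_of_notMem (mt mem_Ici.mp hv)]
    simp [indicator, wedge, hv]

section ExpMeasure

variable {Ω₁ Ω₂ lam : ℝ} {g : ℝ → ℝ} {F : ℝ × ℝ → ℝ}

lemma integral_indicator_wedge_expMeasure (hΩ₁ : 0 < Ω₁) (hΩ₂ : 0 < Ω₂)
    (hg : ∀ v, lam ≤ v → g v ∈ Icc 0 v)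
    (hF : Integrable ((wedge lam g).indicator F)
      ((expMeasure (1 / Ω₁)).prod (expMeasure (1 / Ω₂)))) :
    ∫ p, (wedge lam g).indicator F p ∂(expMeasure (1 / Ω₁)).prod (expMeasure (1 / Ω₂))
      = ∫ v in Ioi lam, ∫ u in g v..v,
          F (u, v) * (1 / Ω₁ * Real.exp (-u / Ω₁)) * (1 / Ω₂ * Real.exp (-v / Ω₂)) := by
  have hlam : 0 ≤ lam := (hg lam le_rfl).1.trans (hg lam le_rfl).2
  rw [integral_indicator_wedge hF, setIntegral_expMeasure hΩ₂ measurableSet_Ici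
    (Ici_subset_Ici.mpr hlam), integral_Ici_eq_integral_Ioi]
  refine setIntegral_congr_fun measurableSet_Ioi fun v hv => ?_
  obtain ⟨hgv0, hgv⟩ := hg v hv.le
  rw [setIntegral_expMeasure hΩ₁ measurableSet_Icc
      (Icc_subset_Ici_self.trans (Ici_subset_Ici.mpr hgv0)),
    integral_Icc_eq_integral_Ioc, ← intervalIntegral.integral_of_le hgv,
    ← intervalIntegral.integral_mul_const]

lemma integral_indicator_swap_wedge_expMeasure (hΩ₁ : 0 < Ω₁) (hΩ₂ : 0 < Ω₂)
    (hg : ∀ v, lam ≤ v → g v ∈ Icc 0 v)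
    (hF : Integrable ((Prod.swap ⁻¹' wedge lam g).indicator F)
      ((expMeasure (1 / Ω₁)).prod (expMeasure (1 / Ω₂)))) :
    ∫ p, (Prod.swap ⁻¹' wedge lam g).indicator F p
        ∂(expMeasure (1 / Ω₁)).prod (expMeasure (1 / Ω₂))
      = ∫ u in Ioi lam, ∫ v in g u..u,
          F (u, v) * (1 / Ω₁ * Real.exp (-u / Ω₁)) * (1 / Ω₂ * Real.exp (-v / Ω₂)) := by
  have hswap : (fun q => (Prod.swap ⁻¹' wedge lam g).indicator F q.swap)
      = (wedge lam g).indicator (F ∘ Prod.swap) := rfl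
  rw [← integral_prod_swap, hswap,
    integral_indicator_wedge_expMeasure hΩ₂ hΩ₁ hg (hswap ▸ hF.swap)]
  refine setIntegral_congr_fun measurableSet_Ioi fun u _ =>
    intervalIntegral.integral_congr fun v _ => ?_
  simp only [Function.comp_apply, Prod.swap_prod_mk]
  ring

end ExpMeasure

def powerA (P Q d : ℝ) (p : ℝ × ℝ) : ℝ := d * (1 + P * p.1 + Q * p.2) / (p.2 * (P * p.1 - d))

def powerB (P Q e : ℝ) (p : ℝ × ℝ) : ℝ := e * (1 + P * p.1 + Q * p.2) / (p.1 * (Q * p.2 - e))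

def relayPower (P Q d e : ℝ) (p : ℝ × ℝ) : ℝ := max (powerA P Q d p) (powerB P Q e p)

def nonOutageRegion (P Q d e ρ : ℝ) : Set (ℝ × ℝ) :=
  {p | 0 < p.1 ∧ 0 < p.2 ∧ P * p.1 > d ∧ Q * p.2 > e ∧ relayPower P Q d e p ≤ ρ}

/-- The boundary `x = threshold P Q d ρ y` of `{powerA P Q d (x, y) ≤ ρ}`. -/
def threshold (P Q d ρ y : ℝ) : ℝ := d * (1 + (Q + ρ) * y) / (P * (ρ * y - d))

lemma measurable_powerA (P Q d : ℝ) : Measurable (powerA P Q d) := by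
  unfold powerA; fun_prop

lemma measurable_powerB (P Q e : ℝ) : Measurable (powerB P Q e) := by
  unfold powerB; fun_prop

lemma measurable_threshold (P Q d ρ : ℝ) : Measurable (threshold P Q d ρ) := by
  unfold threshold; fun_prop

lemma powerB_eq_powerA_swap (P Q e : ℝ) (p : ℝ × ℝ) :
    powerB P Q e p = powerA Q P e p.swap := by
  simp only [powerA, powerB, Prod.fst_swap, Prod.snd_swap, add_right_comm 1 (P * p.1)]

lemma relayPower_swap (P Q d e : ℝ) (p : ℝ × ℝ) :
    relayPower Q P e d p.swap = relayPower P Q d e p := by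
  rw [relayPower, relayPower, powerB_eq_powerA_swap, Prod.swap_swap, ← powerB_eq_powerA_swap,
    max_comm]

lemma swap_mem_nonOutageRegion {P Q d e ρ : ℝ} {p : ℝ × ℝ} :
    p.swap ∈ nonOutageRegion Q P e d ρ ↔ p ∈ nonOutageRegion P Q d e ρ := by
  simp only [nonOutageRegion, mem_ofPred_eq, Prod.fst_swap, Prod.snd_swap, relayPower_swap]
  tauto

lemma indicator_nonOutageRegion_swap (P Q d e ρ : ℝ) (p : ℝ × ℝ) :
    (nonOutageRegion Q P e d ρ).indicator (relayPower Q P e d) p.swap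
      = (nonOutageRegion P Q d e ρ).indicator (relayPower P Q d e) p := by
  classical
  simp only [indicator_apply, swap_mem_nonOutageRegion, relayPower_swap]

lemma norm_powerA_le {P Q d e ρ : ℝ} (hP : 0 < P) (hQ : 0 < Q) (hd : 0 < d) {p : ℝ × ℝ}
    (hp : p ∈ nonOutageRegion P Q d e ρ) : ‖powerA P Q d p‖ ≤ ρ := by
  obtain ⟨hx, hy, hPx, -, hmax⟩ := hp
  have hA : 0 ≤ powerA P Q d p := div_nonneg (by positivity) (mul_pos hy (sub_pos.mpr hPx)).le
  rw [Real.norm_of_nonneg hA]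
  exact le_of_max_le_left hmax

lemma norm_powerB_le {P Q d e ρ : ℝ} (hP : 0 < P) (hQ : 0 < Q) (he : 0 < e) {p : ℝ × ℝ}
    (hp : p ∈ nonOutageRegion P Q d e ρ) : ‖powerB P Q e p‖ ≤ ρ := by
  rw [powerB_eq_powerA_swap]
  exact norm_powerA_le hQ hP he (swap_mem_nonOutageRegion.mpr hp)

section Region

variable {P Q d c ρ lam x y : ℝ}

lemma powerA_le_iff (hP : 0 < P) (hQ : 0 < Q) (hd : 0 < d) (hy : 0 < y) (hx : d < P * x) :
    powerA P Q d (x, y) ≤ ρ ↔ d < ρ * y ∧ threshold P Q d ρ y ≤ x := by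
  have hx0 : 0 < x := by nlinarith
  rw [powerA, div_le_iff₀ (by nlinarith)]
  constructor
  · intro h
    have hρy : d < ρ * y := by
      by_contra! hρy
      nlinarith [mul_le_mul_of_nonneg_right hρy (sub_pos.mpr hx).le, mul_pos hQ hy]
    refine ⟨hρy, ?_⟩
    rw [threshold, div_le_iff₀ (by nlinarith)]
    linarith
  · rintro ⟨hρy, h⟩
    rw [threshold, div_le_iff₀ (by nlinarith)] at h
    linarith

lemma lt_threshold (hP : 0 < P) (hQ : 0 < Q) (hc : 0 < c) (hρ : 0 < ρ) (hρy : P * c < ρ * y) :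
    c < threshold P Q (P * c) ρ y := by
  have hy : 0 < y := pos_of_mul_pos_right ((mul_pos hP hc).trans hρy) hρ.le
  rw [threshold, lt_div_iff₀ (by nlinarith)]
  nlinarith [mul_pos (mul_pos hP hc) (mul_pos hQ hy), mul_pos (mul_pos hP hc) (mul_pos hP hc)]

lemma powerB_le_powerA (hP : 0 < P) (hQ : 0 < Q) (hc : 0 < c) (hx : c < x) (hxy : x ≤ y) :
    powerB P Q (Q * c) (x, y) ≤ powerA P Q (P * c) (x, y) := by
  have hx0 : 0 < x := hc.trans hx
  have hy : c < y := hx.trans_le hxy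
  have hy0 : 0 < y := hc.trans hy
  have hs : 0 < 1 + P * x + Q * y := by positivity
  rw [powerA, powerB, div_le_div_iff₀ (mul_pos hx0 (sub_pos.mpr (mul_lt_mul_of_pos_left hy hQ)))
    (mul_pos hy0 (sub_pos.mpr (mul_lt_mul_of_pos_left hx hP))), ← sub_nonneg]
  have key : P * c * (1 + P * x + Q * y) * (x * (Q * y - Q * c))
      - Q * c * (1 + P * x + Q * y) * (y * (P * x - P * c))
      = P * Q * c ^ 2 * (1 + P * x + Q * y) * (y - x) := by ring
  rw [key]
  exact mul_nonneg (by positivity) (sub_nonneg.mpr hxy)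

lemma mul_lt_mul_of_root_le (hc : 0 < c) (hρ : 0 < ρ) (hQ : 0 < Q) (hlam : 0 < lam)
    (hroot : ρ * lam ^ 2 = c * (P + Q + ρ) * lam + c) (hy : lam ≤ y) : P * c < ρ * y := by
  nlinarith [mul_pos (mul_pos hc hQ) hlam, mul_pos (mul_pos hc hρ) hlam,
    mul_le_mul_of_nonneg_left hy hρ.le]

lemma threshold_le_iff (hP : 0 < P) (hρ : 0 < ρ) (hc : 0 < c) (hlam : 0 < lam)
    (hroot : ρ * lam ^ 2 = c * (P + Q + ρ) * lam + c) (hρy : P * c < ρ * y) :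
    threshold P Q (P * c) ρ y ≤ y ↔ lam ≤ y := by
  have hy : 0 < y := by nlinarith
  -- `lam` being a root factors the quadratic `ρ y² - c (P + Q + ρ) y - c`
  have key : lam * (y * (P * (ρ * y - P * c)) - P * c * (1 + (Q + ρ) * y))
      = P * ((y - lam) * (ρ * lam * y + c)) := by linear_combination (P * y) * hroot
  rw [threshold, div_le_iff₀ (by nlinarith), ← sub_nonneg, ← mul_nonneg_iff_of_pos_left hlam,
    key, mul_nonneg_iff_of_pos_left hP, mul_nonneg_iff_of_pos_right (by positivity), sub_nonneg]

lemma threshold_mem_Icc (hP : 0 < P) (hQ : 0 < Q) (hc : 0 < c) (hρ : 0 < ρ) (hlam : 0 < lam)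
    (hroot : ρ * lam ^ 2 = c * (P + Q + ρ) * lam + c) (hy : lam ≤ y) :
    threshold P Q (P * c) ρ y ∈ Icc 0 y :=
  have hρy := mul_lt_mul_of_root_le hc hρ hQ hlam hroot hy
  ⟨hc.le.trans (lt_threshold hP hQ hc hρ hρy).le,
    (threshold_le_iff hP hρ hc hlam hroot hρy).mpr hy⟩

lemma mem_nonOutageRegion_iff_mem_wedge (hP : 0 < P) (hQ : 0 < Q) (hc : 0 < c) (hρ : 0 < ρ)
    (hlam : 0 < lam) (hroot : ρ * lam ^ 2 = c * (P + Q + ρ) * lam + c) {p : ℝ × ℝ}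
    (hp : p.1 ≤ p.2) :
    p ∈ nonOutageRegion P Q (P * c) (Q * c) ρ ↔ p ∈ wedge lam (threshold P Q (P * c) ρ) := by
  obtain ⟨x, y⟩ := p
  constructor
  · rintro ⟨-, hy, hPx, -, hmax⟩
    obtain ⟨hρy, hg⟩ :=
      (powerA_le_iff hP hQ (mul_pos hP hc) hy hPx).mp (le_of_max_le_left hmax)
    exact ⟨(threshold_le_iff hP hρ hc hlam hroot hρy).mp (hg.trans hp), hg, hp⟩
  · rintro ⟨hy, hg, -⟩
    have hρy := mul_lt_mul_of_root_le hc hρ hQ hlam hroot hy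
    have hcx : c < x := (lt_threshold hP hQ hc hρ hρy).trans_le hg
    have hcy : c < y := hcx.trans_le hp
    have hA := (powerA_le_iff hP hQ (mul_pos hP hc) (hc.trans hcy)
      (mul_lt_mul_of_pos_left hcx hP)).mpr ⟨hρy, hg⟩
    exact ⟨hc.trans hcx, hc.trans hcy, mul_lt_mul_of_pos_left hcx hP,
      mul_lt_mul_of_pos_left hcy hQ, max_le hA ((powerB_le_powerA hP hQ hc hcx hp).trans hA)⟩

lemma indicator_nonOutageRegion_of_le (hP : 0 < P) (hQ : 0 < Q) (hc : 0 < c) (hρ : 0 < ρ)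
    (hlam : 0 < lam) (hroot : ρ * lam ^ 2 = c * (P + Q + ρ) * lam + c) {p : ℝ × ℝ}
    (hp : p.1 ≤ p.2) :
    (nonOutageRegion P Q (P * c) (Q * c) ρ).indicator (relayPower P Q (P * c) (Q * c)) p
      = (wedge lam (threshold P Q (P * c) ρ)).indicator (powerA P Q (P * c)) p := by
  have hiff := mem_nonOutageRegion_iff_mem_wedge hP hQ hc hρ hlam hroot hp
  by_cases hw : p ∈ wedge lam (threshold P Q (P * c) ρ)
  · have hcx : c < p.1 := lt_of_mul_lt_mul_left (hiff.mpr hw).2.2.1 hP.le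
    rw [indicator_of_mem (hiff.mpr hw), indicator_of_mem hw, relayPower,
      max_eq_left (powerB_le_powerA hP hQ hc hcx hp)]
  · rw [indicator_of_notMem (mt hiff.mp hw), indicator_of_notMem hw]

lemma indicator_nonOutageRegion_of_ne (hP : 0 < P) (hQ : 0 < Q) (hc : 0 < c) (hρ : 0 < ρ)
    (hlam : 0 < lam) (hroot : ρ * lam ^ 2 = c * (P + Q + ρ) * lam + c) {p : ℝ × ℝ}
    (hp : p.1 ≠ p.2) :
    (nonOutageRegion P Q (P * c) (Q * c) ρ).indicator (relayPower P Q (P * c) (Q * c)) p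
      = (wedge lam (threshold P Q (P * c) ρ)).indicator (powerA P Q (P * c)) p
        + (Prod.swap ⁻¹' wedge lam (threshold Q P (Q * c) ρ)).indicator
          (powerB P Q (Q * c)) p := by
  rcases hp.lt_or_gt with hlt | hgt
  · have hw : p ∉ Prod.swap ⁻¹' wedge lam (threshold Q P (Q * c) ρ) :=
      fun hw => hlt.not_ge hw.2.2
    rw [indicator_nonOutageRegion_of_le hP hQ hc hρ hlam hroot hlt.le, indicator_of_notMem hw,
      add_zero]
  · have hw : p ∉ wedge lam (threshold P Q (P * c) ρ) := fun hw => hgt.not_ge hw.2.2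
    have hroot' : ρ * lam ^ 2 = c * (Q + P + ρ) * lam + c := by rwa [add_comm Q]
    rw [← indicator_nonOutageRegion_swap, indicator_nonOutageRegion_of_le hQ hP hc hρ hlam hroot'
      hgt.le, indicator_of_notMem hw, zero_add]
    classical
    simp only [indicator_apply, mem_preimage, powerB_eq_powerA_swap]

lemma indicator_nonOutageRegion_ae_eq (hP : 0 < P) (hQ : 0 < Q) (hc : 0 < c) (hρ : 0 < ρ)
    (hlam : 0 < lam) (hroot : ρ * lam ^ 2 = c * (P + Q + ρ) * lam + c) (μ ν : Measure ℝ)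
    [SFinite ν] [NullSingletonClass ν] :
    (nonOutageRegion P Q (P * c) (Q * c) ρ).indicator (relayPower P Q (P * c) (Q * c))
      =ᵐ[μ.prod ν] (wedge lam (threshold P Q (P * c) ρ)).indicator (powerA P Q (P * c))
        + (Prod.swap ⁻¹' wedge lam (threshold Q P (Q * c) ρ)).indicator (powerB P Q (Q * c)) := by
  filter_upwards [ae_fst_ne_snd μ ν] with p hp
    using indicator_nonOutageRegion_of_ne hP hQ hc hρ hlam hroot hp

lemma integrable_indicator_wedge_powerA (hP : 0 < P) (hQ : 0 < Q) (hc : 0 < c) (hρ : 0 < ρ)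
    (hlam : 0 < lam) (hroot : ρ * lam ^ 2 = c * (P + Q + ρ) * lam + c) (μ : Measure (ℝ × ℝ))
    [IsFiniteMeasure μ] :
    Integrable ((wedge lam (threshold P Q (P * c) ρ)).indicator (powerA P Q (P * c))) μ :=
  integrable_indicator_of_norm_le (measurableSet_wedge _ (measurable_threshold ..))
    (measurable_powerA ..) fun _ hp => norm_powerA_le hP hQ (mul_pos hP hc)
      ((mem_nonOutageRegion_iff_mem_wedge hP hQ hc hρ hlam hroot hp.2.2).mpr hp)

lemma integrable_indicator_swap_wedge_powerB (hP : 0 < P) (hQ : 0 < Q) (hc : 0 < c)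
    (hρ : 0 < ρ) (hlam : 0 < lam) (hroot : ρ * lam ^ 2 = c * (P + Q + ρ) * lam + c)
    (μ : Measure (ℝ × ℝ)) [IsFiniteMeasure μ] :
    Integrable ((Prod.swap ⁻¹' wedge lam (threshold Q P (Q * c) ρ)).indicator
      (powerB P Q (Q * c))) μ := by
  have hroot' : ρ * lam ^ 2 = c * (Q + P + ρ) * lam + c := by rwa [add_comm Q]
  exact integrable_indicator_of_norm_le
    ((measurableSet_wedge _ (measurable_threshold ..)).preimage measurable_swap)
    (measurable_powerB ..) fun _ hp => norm_powerB_le hP hQ (mul_pos hQ hc)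
      (swap_mem_nonOutageRegion.mp
        ((mem_nonOutageRegion_iff_mem_wedge hQ hP hc hρ hlam hroot' hp.2.2).mpr hp))

end Region

lemma quadratic_formula_root {P c S ρ lam : ℝ} (hP : 0 < P) (hc : 0 < c) (hS : 0 < S)
    (hρ : 0 < ρ)
    (hlam : lam = P * c * S / (2 * P * ρ) * (1 + Real.sqrt (1 + 4 * P * ρ / (P * c * S ^ 2)))) :
    ρ * lam ^ 2 = c * S * lam + c := by
  have ht := Real.sq_sqrt (show 0 ≤ 1 + 4 * P * ρ / (P * c * S ^ 2) by positivity)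
  set t := Real.sqrt (1 + 4 * P * ρ / (P * c * S ^ 2))
  have ht' : c * S ^ 2 * (t ^ 2 - 1) = 4 * ρ := by
    rw [ht]; field_simp; ring
  subst hlam
  field_simp
  linear_combination ht'

end RelayPower

end

open RelayPower

/-- Average relay power formula (eq. (16)): under the balanced-rate condition, the
average power of the truncated optimal policy,
`E[max{A(X,Y),B(X,Y)} · 1{(X,Y) ∈ M(ρ)}]`, equals the sum of two double integrals
over the regions `M₁(ρ)` and `M₂(ρ)`. -/
theorem average_relay_power_formula
    {Ω : Type*} [MeasurableSpace Ω] (μ : Measure Ω) [IsProbabilityMeasure μ]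
    (X Y : Ω → ℝ) (hXm : Measurable X) (hYm : Measurable Y)
    (ΩX ΩY : ℝ) (hΩX : 0 < ΩX) (hΩY : 0 < ΩY)
    (hX : Measure.map X μ = expMeasure (1 / ΩX))
    (hY : Measure.map Y μ = expMeasure (1 / ΩY))
    (hindep : IndepFun X Y μ)
    (fX fY : ℝ → ℝ)
    (hfX : fX = fun z => (1 / ΩX) * Real.exp (-z / ΩX))
    (hfY : fY = fun z => (1 / ΩY) * Real.exp (-z / ΩY))
    (PS1 PS2 δ1 δ2 ρ : ℝ)
    (hPS1 : 0 < PS1) (hPS2 : 0 < PS2) (hδ1 : 0 < δ1) (hδ2 : 0 < δ2) (hρ : 0 < ρ)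
    (hbal : PS1 / δ1 = PS2 / δ2)
    (lam : ℝ)
    (hlam : lam = (δ2 * (PS1 + PS2 + ρ) / (2 * PS2 * ρ)) *
      (1 + Real.sqrt (1 + 4 * PS2 * ρ / (δ2 * (PS1 + PS2 + ρ) ^ 2))))
    (Mρ : Set (ℝ × ℝ))
    (hMρ : Mρ = {p : ℝ × ℝ | 0 < p.1 ∧ 0 < p.2 ∧ PS1 * p.1 > δ1 ∧ PS2 * p.2 > δ2 ∧
        max (δ1 * (1 + PS1 * p.1 + PS2 * p.2) / (p.2 * (PS1 * p.1 - δ1)))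
            (δ2 * (1 + PS1 * p.1 + PS2 * p.2) / (p.1 * (PS2 * p.2 - δ2))) ≤ ρ}) :
    (∫ ω, Set.indicator Mρ
        (fun p => max (δ1 * (1 + PS1 * p.1 + PS2 * p.2) / (p.2 * (PS1 * p.1 - δ1)))
                      (δ2 * (1 + PS1 * p.1 + PS2 * p.2) / (p.1 * (PS2 * p.2 - δ2))))
        (X ω, Y ω) ∂μ)
      = (∫ y in Ioi lam,
            ∫ x in (δ1 * (1 + (PS2 + ρ) * y) / (PS1 * (ρ * y - δ1)))..y,
              (δ1 * (1 + PS1 * x + PS2 * y) / (y * (PS1 * x - δ1))) * fX x * fY y)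
        + ∫ x in Ioi lam,
            ∫ y in (δ2 * (1 + (PS1 + ρ) * x) / (PS2 * (ρ * x - δ2)))..x,
              (δ2 * (1 + PS1 * x + PS2 * y) / (x * (PS2 * y - δ2))) * fX x * fY y := by
  obtain ⟨c, hc, rfl, rfl⟩ : ∃ c, 0 < c ∧ δ1 = PS1 * c ∧ δ2 = PS2 * c :=
    ⟨δ1 / PS1, by positivity, by field_simp, by field_simp at hbal ⊢; linarith⟩
  have hroot := quadratic_formula_root hPS2 hc (by positivity) hρ hlam
  have hroot' : ρ * lam ^ 2 = c * (PS2 + PS1 + ρ) * lam + c := by rwa [add_comm PS2]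
  have hlam0 : 0 < lam := by rw [hlam]; positivity
  have := isProbabilityMeasure_expMeasure (one_div_pos.mpr hΩX)
  have := isProbabilityMeasure_expMeasure (one_div_pos.mpr hΩY)
  have hν : μ.map (fun ω => (X ω, Y ω)) = (expMeasure (1 / ΩX)).prod (expMeasure (1 / ΩY)) := by
    rw [← hX, ← hY]
    exact (indepFun_iff_map_prod_eq_prod_map_map hXm.aemeasurable hYm.aemeasurable).mp hindep
  have h₁ := integrable_indicator_wedge_powerA hPS1 hPS2 hc hρ hlam0 hroot
    ((expMeasure (1 / ΩX)).prod (expMeasure (1 / ΩY)))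
  have h₂ := integrable_indicator_swap_wedge_powerB hPS1 hPS2 hc hρ hlam0 hroot
    ((expMeasure (1 / ΩX)).prod (expMeasure (1 / ΩY)))
  have hsplit := indicator_nonOutageRegion_ae_eq hPS1 hPS2 hc hρ hlam0 hroot
    (expMeasure (1 / ΩX)) (expMeasure (1 / ΩY))
  subst hMρ hfX hfY
  change ∫ ω, (nonOutageRegion PS1 PS2 (PS1 * c) (PS2 * c) ρ).indicator
    (relayPower PS1 PS2 (PS1 * c) (PS2 * c)) (X ω, Y ω) ∂μ = _
  rw [← integral_map (hXm.prodMk hYm).aemeasurable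
      (hν ▸ (h₁.add h₂).aestronglyMeasurable.congr hsplit.symm), hν, integral_congr_ae hsplit,
    integral_add' h₁ h₂,
    integral_indicator_wedge_expMeasure hΩX hΩY
      (fun _ => threshold_mem_Icc hPS1 hPS2 hc hρ hlam0 hroot) h₁,
    integral_indicator_swap_wedge_expMeasure hΩX hΩY
      (fun _ => threshold_mem_Icc hPS2 hPS1 hc hρ hlam0 hroot') h₂]
  rfl
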